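/- arXiv:1909.09381 — 2 statements merged into one kernel-verified Lean document; each statement's English description precedes it below -/
import Mathlib

section
/- For every signed graph (G,σ), the zero-free chromatic number γ*(G,σ) equals the minimum number of antibalanced sets into which V(G) can be partitioned, and also equals the minimum, over all signatures σ' equivalent to σ, of the chromatic number of the spanning subgraph of G formed by the σ'-positive edges. -/
open SimpleGraph

/-- The switching function associated with `s : V → ℤˣ`. -/
def switchFn {V : Type*} (s : V → ℤˣ) : Sym2 V → ℤˣ :=
  Sym2.lift ⟨fun u v => s u * s v, fun u v => mul_comm (s u) (s v)⟩

/-- A zero-free coloring of `(G, σ)` with `k` colors: a map into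
`{-k, …, -1, 1, …, k}` with `c u ≠ σ(uv) * c v` on every edge. -/
def IsZeroFreeColoring {V : Type*} (G : SimpleGraph V) (σ : Sym2 V → ℤˣ) (k : ℕ)
    (c : V → ℤ) : Prop :=
  (∀ v, 1 ≤ |c v| ∧ |c v| ≤ (k : ℤ)) ∧
    ∀ u v : V, G.Adj u v → c u ≠ (σ s(u, v) : ℤ) * c v

/-- Zaslavsky's zero-free chromatic number `γ*`. -/
noncomputable def gammaStar {V : Type*} (G : SimpleGraph V) (σ : Sym2 V → ℤˣ) : ℕ :=
  sInf {k : ℕ | ∃ c : V → ℤ, IsZeroFreeColoring G σ k c}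

/-- A set `S` of vertices is antibalanced in `(G, σ)` if the induced signed
subgraph on `S` is switching equivalent to the all-negative signature. -/
def AntibalancedOn {V : Type*} (G : SimpleGraph V) (σ : Sym2 V → ℤˣ) (S : Set V) : Prop :=
  ∃ s : V → ℤˣ, ∀ u v : V, u ∈ S → v ∈ S → G.Adj u v →
    switchFn s s(u, v) * σ s(u, v) = -1

/-- The spanning subgraph of positive edges of `(G, σ)`. -/
def posSubgraph {V : Type*} (G : SimpleGraph V) (σ : Sym2 V → ℤˣ) : SimpleGraph V where
  Adj u v := G.Adj u v ∧ σ s(u, v) = 1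
  symm := by
    constructor
    intro u v h
    exact ⟨h.1.symm, by rw [Sym2.eq_swap]; exact h.2⟩
  loopless := ⟨fun v h => G.loopless.irrefl v h.1⟩

/-!
A zero-free colour is a sign times a magnitude `≥ 1`, and colours `a m`, `b n` at the ends of an
edge `uv` conflict exactly when `m = n` and `a b σ(uv) = +1`. Hence the classes of equal magnitude
are antibalanced, switched by the signs. Conversely, gluing the switchings of the classes of an
antibalanced partition makes every positive edge join two different classes, so the class map
colours the positive subgraph; and a colouring `f` of the positive subgraph after switching by `s`
yields the zero-free colouring `v ↦ s v * (f v + 1)`.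
-/

@[simp]
lemma switchFn_mk {V : Type*} (s : V → ℤˣ) (u v : V) : switchFn s s(u, v) = s u * s v :=
  rfl

lemma exists_unit_mul_abs (x : ℤ) : ∃ a : ℤˣ, (a : ℤ) * |x| = x := by
  rcases abs_choice x with h | h
  · exact ⟨1, by simp [h]⟩
  · exact ⟨-1, by simp [h]⟩

lemma units_mul_ne_units_mul_iff {a b ε : ℤˣ} {m n : ℤ} (hm : 0 < m) (hn : 0 < n) :
    (a : ℤ) * m ≠ ε * (b * n) ↔ m ≠ n ∨ a * b * ε = -1 := by
  rcases Int.units_eq_one_or a with rfl | rfl <;>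
    rcases Int.units_eq_one_or b with rfl | rfl <;>
    rcases Int.units_eq_one_or ε with rfl | rfl <;>
    simp <;> omega

section

variable {V : Type*} {G : SimpleGraph V} {σ : Sym2 V → ℤˣ}

lemma exists_antibalanced_partition_of_isZeroFreeColoring {k : ℕ} {c : V → ℤ}
    (hc : IsZeroFreeColoring G σ k c) :
    ∃ f : V → Fin k, ∀ i, AntibalancedOn G σ (f ⁻¹' {i}) := by
  obtain ⟨hbound, hproper⟩ := hc
  choose s hs using fun v => exists_unit_mul_abs (c v)
  simp only [Int.abs_eq_natAbs] at hbound
  have hpos : ∀ w, 0 < |c w| := fun w => by have := hbound w; rw [Int.abs_eq_natAbs]; omega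
  refine ⟨fun v => ⟨(c v).natAbs - 1, by have := hbound v; omega⟩, fun i => ⟨s, ?_⟩⟩
  intro u v hu hv huv
  have habs : |c u| = |c v| := by
    simp only [Set.mem_preimage, Set.mem_singleton_iff, Fin.ext_iff] at hu hv
    have := hbound u; have := hbound v
    rw [Int.abs_eq_natAbs, Int.abs_eq_natAbs]
    omega
  have hne := hproper u v huv
  rw [← hs u, ← hs v, units_mul_ne_units_mul_iff (hpos u) (hpos v)] at hne
  simpa [habs] using hne

lemma exists_switching_antibalanced_on_fibers {ι : Type*} (f : V → ι)
    (hf : ∀ i, AntibalancedOn G σ (f ⁻¹' {i})) :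
    ∃ s : V → ℤˣ, ∀ u v, G.Adj u v → f u = f v → switchFn s s(u, v) * σ s(u, v) = -1 := by
  choose t ht using hf
  refine ⟨fun v => t (f v) v, fun u v huv hfuv => ?_⟩
  simpa [hfuv] using ht (f v) u v hfuv rfl huv

lemma nonempty_coloring_posSubgraph_of_antibalanced_partition {ι : Type*} (f : V → ι)
    (hf : ∀ i, AntibalancedOn G σ (f ⁻¹' {i})) :
    ∃ s : V → ℤˣ, Nonempty ((posSubgraph G (fun e => switchFn s e * σ e)).Coloring ι) := by
  obtain ⟨s, hs⟩ := exists_switching_antibalanced_on_fibers f hf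
  refine ⟨s, ⟨Coloring.mk f fun {u v} ⟨huv, hpos⟩ hfuv => ?_⟩⟩
  have hneg : switchFn s s(u, v) * σ s(u, v) = -1 := hs u v huv hfuv
  exact absurd (hpos.symm.trans hneg) (by decide)

lemma exists_isZeroFreeColoring_of_colorable_posSubgraph {m : ℕ} (s : V → ℤˣ)
    (h : (posSubgraph G (fun e => switchFn s e * σ e)).Colorable m) :
    ∃ c : V → ℤ, IsZeroFreeColoring G σ m c := by
  obtain ⟨f⟩ := h
  have habs : ∀ v, |(s v : ℤ) * ((f v : ℕ) + 1)| = (f v : ℕ) + 1 := fun v => by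
    rw [abs_mul, Int.abs_eq_natAbs (s v), Int.units_natAbs, Nat.cast_one, one_mul]
    exact abs_of_nonneg (by positivity)
  refine ⟨fun v => s v * ((f v : ℕ) + 1), fun v => ?_, fun u v huv => ?_⟩
  · have := (f v).isLt
    rw [habs]
    omega
  · rw [units_mul_ne_units_mul_iff (by positivity) (by positivity)]
    by_cases hfuv : f u = f v
    · right
      have hnpos : switchFn s s(u, v) * σ s(u, v) ≠ 1 := fun hpos =>
        f.valid ⟨huv, hpos⟩ hfuv
      simpa using Int.units_ne_iff_eq_neg.mp hnpos
    · left
      exact_mod_cast fun h => hfuv (Fin.ext (by omega))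

end

theorem gammaStar_eq_min_antibalanced_partition_eq_min_chrom_pos_general
    {V : Type*} (G : SimpleGraph V) (σ : Sym2 V → ℤˣ) :
    gammaStar G σ =
        sInf {m : ℕ | ∃ c : V → Fin m, ∀ i : Fin m, AntibalancedOn G σ (c ⁻¹' {i})} ∧
      gammaStar G σ =
        sInf {m : ℕ | ∃ s : V → ℤˣ,
          (posSubgraph G (fun e => switchFn s e * σ e)).Colorable m} := by
  have zeroFree_to_partition : ∀ k, (∃ c, IsZeroFreeColoring G σ k c) →
      ∃ f : V → Fin k, ∀ i, AntibalancedOn G σ (f ⁻¹' {i}) := fun _ ⟨_, hc⟩ =>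
    exists_antibalanced_partition_of_isZeroFreeColoring hc
  have partition_to_colorable : ∀ m, (∃ f : V → Fin m, ∀ i, AntibalancedOn G σ (f ⁻¹' {i})) →
      ∃ s : V → ℤˣ, (posSubgraph G (fun e => switchFn s e * σ e)).Colorable m :=
    fun _ ⟨f, hf⟩ => nonempty_coloring_posSubgraph_of_antibalanced_partition f hf
  have colorable_to_zeroFree : ∀ m, (∃ s : V → ℤˣ,
      (posSubgraph G (fun e => switchFn s e * σ e)).Colorable m) →
      ∃ c, IsZeroFreeColoring G σ m c := fun _ ⟨s, hs⟩ =>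
    exists_isZeroFreeColoring_of_colorable_posSubgraph s hs
  exact ⟨congrArg sInf <| Set.ext fun k =>
      ⟨zeroFree_to_partition k, fun h => colorable_to_zeroFree k (partition_to_colorable k h)⟩,
    congrArg sInf <| Set.ext fun k =>
      ⟨fun h => partition_to_colorable k (zeroFree_to_partition k h), colorable_to_zeroFree k⟩⟩

/-- The zero-free chromatic number equals the minimum number of antibalanced
sets into which the vertex set can be partitioned, and also the minimum over all
equivalent signatures `σ'` of the chromatic number of the subgraph of
`σ'`-positive edges. -/
theorem gammaStar_eq_min_antibalanced_partition_eq_min_chrom_pos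
    {V : Type*} [Fintype V] (G : SimpleGraph V) (σ : Sym2 V → ℤˣ) :
    gammaStar G σ =
        sInf {m : ℕ | ∃ c : V → Fin m, ∀ i : Fin m, AntibalancedOn G σ (c ⁻¹' {i})} ∧
      gammaStar G σ =
        sInf {m : ℕ | ∃ s : V → ℤˣ,
          (posSubgraph G (fun e => switchFn s e * σ e)).Colorable m} :=
  gammaStar_eq_min_antibalanced_partition_eq_min_chrom_pos_general G σ
end

section
/- For every finite graph G, the chromatic spectrum Σ_χ(G) = {χ(G,σ) : σ a signature on G} is an interval of integers, i.e., Σ_χ(G) = {k ∈ ℕ : m_χ(G) ≤ k ≤ M_χ(G)} where m_χ(G) and M_χ(G) are its minimum and maximum; likewise Σ_{χ±}(G) = {χ±(G,σ) : σ a signature on G} equals {k ∈ ℕ : m_{χ±}(G) ≤ k ≤ M_{χ±}(G)}. -/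
open SimpleGraph

/-- `|x|_k`: the circular distance of `x` from `0` in `ℤ/kℤ`, i.e.
`min([x]_k, [-x]_k)` where `[x]_k` is the remainder of `x` modulo `k`. -/
def cdist (k : ℕ) (x : ℤ) : ℤ :=
  min (x % (k : ℤ)) ((-x) % (k : ℤ))

/-- A `(k,d)`-coloring of a signed graph `(G, σ)`: a map `c : V → ℤ_k`
(represented by integers in `[0, k)`) with `d ≤ |c u − σ(uv)·c v|_k` for every
edge `uv`. -/
def IsKDColoring {V : Type*} (G : SimpleGraph V) (σ : Sym2 V → ℤˣ) (k d : ℕ)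
    (c : V → ℤ) : Prop :=
  (∀ v, 0 ≤ c v ∧ c v < (k : ℤ)) ∧
    ∀ u v : V, G.Adj u v → (d : ℤ) ≤ cdist k (c u - (σ s(u, v) : ℤ) * c v)

/-- The (modular) chromatic number of `(G, σ)`: the least `k` (with `k ≥ 2`)
such that `(G, σ)` has a `(k,1)`-coloring. -/
noncomputable def chiMod {V : Type*} (G : SimpleGraph V) (σ : Sym2 V → ℤˣ) : ℕ :=
  sInf {k : ℕ | 2 ≤ k ∧ ∃ c : V → ℤ, IsKDColoring G σ k 1 c}

/-- The circular chromatic number of `(G, σ)`: the infimum of `k/d` over all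
pairs `(k, d)` of positive integers with `2d ≤ k` such that `(G, σ)` has a
`(k,d)`-coloring. -/
noncomputable def circChrom {V : Type*} (G : SimpleGraph V) (σ : Sym2 V → ℤˣ) : ℝ :=
  sInf {r : ℝ | ∃ k d : ℕ, 0 < d ∧ 2 * d ≤ k ∧ r = (k : ℝ) / (d : ℝ) ∧
    ∃ c : V → ℤ, IsKDColoring G σ k d c}

/-- The color set `M_n` of Máčajová–Raspaud–Škoviera:
`M_{2k} = {±1, …, ±k}` and `M_{2k+1} = {0, ±1, …, ±k}`. -/
def Mset (n : ℕ) : Set ℤ :=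
  {x : ℤ | 2 * |x| ≤ (n : ℤ) ∧ (x = 0 → Odd n)}

/-- An `n`-coloring of a signed graph `(G, σ)`. -/
def IsPMColoring {V : Type*} (G : SimpleGraph V) (σ : Sym2 V → ℤˣ) (n : ℕ)
    (c : V → ℤ) : Prop :=
  (∀ v, c v ∈ Mset n) ∧ ∀ u v : V, G.Adj u v → c u ≠ (σ s(u, v) : ℤ) * c v

/-- The signed chromatic number `χ±`. -/
noncomputable def chiPM {V : Type*} (G : SimpleGraph V) (σ : Sym2 V → ℤˣ) : ℕ :=
  sInf {n : ℕ | ∃ c : V → ℤ, IsPMColoring G σ n c}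

/-!
Changing the sign of one edge `uv` raises `χ` and `χ±` by at most one: starting from an optimal
coloring of the old signed graph, only `u` and a few vertices that could clash with it are
moved to the colors that become available, and all other edges keep their sign. Any two
signatures are joined by a chain of single-edge changes, so along such a chain from a
signature attaining the minimum to one attaining the maximum every intermediate value is
attained.

For `χ` the colors are first lifted to balanced integer representatives in `(k/2 - k, k/2]`:
these stay proper modulo `k + 1`, which leaves the residue `k/2 - k` free for `u`.
-/

section DiscreteIntermediateValue

variable {ι β : Type*} [DecidableEq ι] {f : (ι → β) → ℕ}

theorem mem_range_of_update_le_succ [Finite ι]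
    (hf : ∀ σ i b, f (Function.update σ i b) ≤ f σ + 1) {σ τ : ι → β} {m : ℕ}
    (hσ : f σ ≤ m) (hτ : m ≤ f τ) : m ∈ Set.range f := by
  have := Fintype.ofFinite ι
  suffices ∀ s : Finset ι, m ≤ f (s.piecewise τ σ) → m ∈ Set.range f from
    this Finset.univ (by rwa [Finset.piecewise_univ])
  intro s
  induction s using Finset.induction_on with
  | empty => exact fun h => ⟨σ, by rw [Finset.piecewise_empty] at h; omega⟩
  | insert i s _ ih =>
    intro h
    rw [Finset.piecewise_insert] at h
    by_cases hm : m ≤ f (s.piecewise τ σ)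
    · exact ih hm
    · have := hf (s.piecewise τ σ) i (τ i)
      exact ⟨Function.update (s.piecewise τ σ) i (τ i), by omega⟩

theorem range_eq_Icc_of_update_le_succ [Finite ι] [Finite β] [Nonempty β]
    (hf : ∀ σ i b, f (Function.update σ i b) ≤ f σ + 1) :
    Set.range f = Set.Icc (sInf (Set.range f)) (sSup (Set.range f)) := by
  have hne : (Set.range f).Nonempty := Set.range_nonempty f
  have hbdd : BddAbove (Set.range f) := (Set.finite_range f).bddAbove
  obtain ⟨σ, hσ⟩ := Nat.sInf_mem hne
  obtain ⟨τ, hτ⟩ := Nat.sSup_mem hne hbdd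
  ext m
  constructor
  · exact fun hm => ⟨Nat.sInf_le hm, le_csSup hbdd hm⟩
  · exact fun ⟨h₁, h₂⟩ => mem_range_of_update_le_succ hf (hσ ▸ h₁) (hτ ▸ h₂)

end DiscreteIntermediateValue

lemma Int.units_val_mul_cases (s : ℤˣ) (a : ℤ) :
    (s : ℤ) = 1 ∧ s * a = a ∨ (s : ℤ) = -1 ∧ s * a = -a := by
  rcases Int.units_eq_one_or s with rfl | rfl <;> simp

lemma update_sym2_apply_of_ne {V α : Type*} [DecidableEq (Sym2 V)] (σ : Sym2 V → α) (b : α)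
    {u v x y : V} (hx : x ≠ u) (hy : y ≠ u) : Function.update σ s(u, v) b s(x, y) = σ s(x, y) :=
  Function.update_of_ne (by rw [Ne, Sym2.eq_iff]; tauto) _ _

lemma one_le_cdist_iff {k : ℕ} (hk : 0 < k) (x : ℤ) : 1 ≤ cdist k x ↔ ¬ (k : ℤ) ∣ x := by
  have key (y : ℤ) : 1 ≤ y % k ↔ ¬ (k : ℤ) ∣ y := by
    have := Int.emod_nonneg y (by omega : (k : ℤ) ≠ 0)
    rw [Int.dvd_iff_emod_eq_zero]
    omega
  rw [cdist, le_min_iff, key, key, Int.dvd_neg, and_self]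

lemma mem_Mset_iff {n : ℕ} {x : ℤ} :
    x ∈ Mset n ↔ -(n : ℤ) ≤ 2 * x ∧ 2 * x ≤ n ∧ (x = 0 → n % 2 = 1) := by
  change 2 * |x| ≤ n ∧ (x = 0 → Odd n) ↔ _
  rw [show 2 * |x| = |2 * x| by rw [abs_mul, abs_two], abs_le, Nat.odd_iff, and_assoc]

section Colorings

variable {V : Type*} {G : SimpleGraph V}

variable (G) in
def IsModColoring (σ : Sym2 V → ℤˣ) (k : ℕ) (c : V → ℤ) : Prop :=
  ∀ u v, G.Adj u v → ¬ (k : ℤ) ∣ c u - σ s(u, v) * c v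

lemma IsModColoring.of_modEq {σ : Sym2 V → ℤˣ} {k : ℕ} {c c' : V → ℤ}
    (hc : IsModColoring G σ k c) (h : ∀ v, c v ≡ c' v [ZMOD k]) : IsModColoring G σ k c' := by
  intro u v huv hdvd
  have hmod : c u - σ s(u, v) * c v ≡ c' u - σ s(u, v) * c' v [ZMOD k] :=
    (h u).sub ((h v).mul_left _)
  exact hc u v huv (Int.modEq_zero_iff_dvd.mp (hmod.trans (Int.modEq_zero_iff_dvd.mpr hdvd)))

lemma exists_isKDColoring_one_iff {σ : Sym2 V → ℤˣ} {k : ℕ} (hk : 0 < k) :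
    (∃ c, IsKDColoring G σ k 1 c) ↔ ∃ c, IsModColoring G σ k c := by
  have hk' : (0 : ℤ) < k := by exact_mod_cast hk
  constructor
  · rintro ⟨c, -, hc⟩
    exact ⟨c, fun u v huv => (one_le_cdist_iff hk _).mp (by exact_mod_cast hc u v huv)⟩
  · rintro ⟨c, hc⟩
    refine ⟨fun v => c v % k, fun v => ⟨Int.emod_nonneg _ hk'.ne', Int.emod_lt_of_pos _ hk'⟩,
      fun u v huv => ?_⟩
    rw [Nat.cast_one, one_le_cdist_iff hk]
    exact hc.of_modEq (fun v => (Int.mod_modEq _ _).symm) u v huv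

lemma chiMod_eq_sInf_isModColoring (σ : Sym2 V → ℤˣ) :
    chiMod G σ = sInf {k | 2 ≤ k ∧ ∃ c, IsModColoring G σ k c} := by
  rw [chiMod]
  congr 1
  ext k
  exact and_congr_right fun hk => exists_isKDColoring_one_iff (by omega)

lemma Int.not_dvd_of_ne_zero_of_abs_lt {m d : ℤ} (h : d ≠ 0 ∧ -m < d ∧ d < m) : ¬ m ∣ d :=
  fun hd => h.1 (Int.eq_zero_of_abs_lt_dvd hd (abs_lt.mpr h.2))

lemma IsPMColoring.isModColoring {σ : Sym2 V → ℤˣ} {n k : ℕ} {c : V → ℤ}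
    (hc : IsPMColoring G σ n c) (hnk : n < k) : IsModColoring G σ k c := by
  intro u v huv
  have hu := mem_Mset_iff.mp (hc.1 u)
  have hv := mem_Mset_iff.mp (hc.1 v)
  have hne := hc.2 u v huv
  have hσ := Int.units_val_mul_cases (σ s(u, v)) (c v)
  exact Int.not_dvd_of_ne_zero_of_abs_lt (by omega)

lemma exists_isPMColoring [Finite V] (σ : Sym2 V → ℤˣ) : ∃ n c, IsPMColoring G σ n c := by
  have := Fintype.ofFinite V
  let e := Fintype.equivFin V
  refine ⟨2 * Fintype.card V, fun v => (e v : ℤ) + 1, fun v => ?_, fun u v huv => ?_⟩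
  · have := (e v).isLt
    rw [mem_Mset_iff]
    dsimp only
    omega
  · have hne : (e u : ℤ) ≠ e v := by
      exact_mod_cast Fin.val_injective.ne (e.injective.ne (G.ne_of_adj huv))
    have hσ := Int.units_val_mul_cases (σ s(u, v)) ((e v : ℤ) + 1)
    dsimp only
    omega

lemma chiPM_le {σ : Sym2 V → ℤˣ} {n : ℕ} {c : V → ℤ} (hc : IsPMColoring G σ n c) :
    chiPM G σ ≤ n :=
  Nat.sInf_le ⟨c, hc⟩

lemma exists_isPMColoring_chiPM [Finite V] (σ : Sym2 V → ℤˣ) :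
    ∃ c, IsPMColoring G σ (chiPM G σ) c :=
  Nat.sInf_mem (exists_isPMColoring σ)

lemma chiMod_le {σ : Sym2 V → ℤˣ} {k : ℕ} {c : V → ℤ} (hk : 2 ≤ k) (hc : IsModColoring G σ k c) :
    chiMod G σ ≤ k := by
  rw [chiMod_eq_sInf_isModColoring]
  exact Nat.sInf_le ⟨hk, c, hc⟩

lemma two_le_chiMod_and_exists_isModColoring [Finite V] (σ : Sym2 V → ℤˣ) :
    2 ≤ chiMod G σ ∧ ∃ c, IsModColoring G σ (chiMod G σ) c := by
  obtain ⟨n, c, hc⟩ := exists_isPMColoring (G := G) σ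
  rw [chiMod_eq_sInf_isModColoring]
  exact Nat.sInf_mem (s := {k | 2 ≤ k ∧ ∃ c, IsModColoring G σ k c})
    ⟨n + 2, by omega, c, hc.isModColoring (by omega)⟩

lemma IsModColoring.exists_balanced {σ : Sym2 V → ℤˣ} {k : ℕ} {c : V → ℤ}
    (hc : IsModColoring G σ k c) (hk : 0 < k) (t : ℤ) :
    ∃ ψ, IsModColoring G σ k ψ ∧ ∀ x, t - k < ψ x ∧ ψ x ≤ t := by
  refine ⟨fun x => t - (t - c x) % k, hc.of_modEq fun x => ?_, fun x => ?_⟩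
  · simpa using ((Int.mod_modEq (t - c x) k).sub_left t).symm
  · have := Int.emod_nonneg (t - c x) (by omega : (k : ℤ) ≠ 0)
    have := Int.emod_lt_of_pos (t - c x) (by omega : (0 : ℤ) < k)
    dsimp only
    omega

lemma IsModColoring.exists_succ {σ σ' : Sym2 V → ℤˣ} {k : ℕ} {c : V → ℤ}
    (hc : IsModColoring G σ' k c) (hk : 2 ≤ k) (u : V)
    (hσ : ∀ x y, x ≠ u → y ≠ u → σ s(x, y) = σ' s(x, y)) :
    ∃ c', IsModColoring G σ (k + 1) c' := by
  classical
  obtain ⟨t, ht⟩ : ∃ t : ℤ, 2 * t ≤ k ∧ (k : ℤ) ≤ 2 * t + 1 := ⟨k / 2, by omega, by omega⟩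
  obtain ⟨ψ, hψ, hbal⟩ := hc.exists_balanced (by omega) t
  -- For even `k` the free residue `t - k` is `-t`, so a vertex `w` with `ψ w = t` behind a
  -- negative edge at `u` would clash with `u`; such vertices are pairwise non-adjacent and
  -- move to `t - k` as well.
  let c' : V → ℤ := fun w =>
    if w = u ∨ (2 * t = k ∧ ψ w = t ∧ (σ s(u, w) : ℤ) = -1) then t - k else ψ w
  have hcu : c' u = t - k := if_pos (Or.inl rfl)
  have hcw (w : V) (hw : w ≠ u) :
      c' w = if 2 * t = k ∧ ψ w = t ∧ (σ s(u, w) : ℤ) = -1 then t - k else ψ w := by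
    simp [c', hw]
  have hψ_ne (x y : V) (hxy : G.Adj x y) (hx : x ≠ u) (hy : y ≠ u) :
      ψ x - σ s(x, y) * ψ y ≠ 0 ∧ ψ x - σ s(x, y) * ψ y ≠ k ∧ ψ x - σ s(x, y) * ψ y ≠ -k := by
    have h := hψ x y hxy
    rw [← hσ x y hx hy] at h
    refine ⟨?_, ?_, ?_⟩ <;> intro he <;> simp [he] at h
  refine ⟨c', fun x y hxy => Int.not_dvd_of_ne_zero_of_abs_lt ?_⟩
  push_cast
  have hx := hbal x
  have hy := hbal y
  rcases eq_or_ne x u with rfl | hxu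
  · rw [hcu, hcw y (G.ne_of_adj hxy).symm]
    have := Int.units_val_mul_cases (σ s(x, y)) (t - k)
    have := Int.units_val_mul_cases (σ s(x, y)) (ψ y)
    split_ifs <;> omega
  rcases eq_or_ne y u with rfl | hyu
  · have hs : (σ s(x, y) : ℤ) = σ s(y, x) := by rw [Sym2.eq_swap]
    rw [hcu, hcw x hxu, hs]
    have := Int.units_val_mul_cases (σ s(y, x)) (t - k)
    split_ifs <;> omega
  · rw [hcw x hxu, hcw y hyu]
    have := hψ_ne x y hxy hxu hyu
    have := Int.units_val_mul_cases (σ s(x, y)) (t - k)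
    have := Int.units_val_mul_cases (σ s(x, y)) (ψ y)
    split_ifs <;> omega

lemma IsPMColoring.update_zero [DecidableEq V] {σ σ' : Sym2 V → ℤˣ} {n : ℕ} {c : V → ℤ}
    (hc : IsPMColoring G σ' n c) (hn : Even n) (u : V)
    (hσ : ∀ x y, x ≠ u → y ≠ u → σ s(x, y) = σ' s(x, y)) :
    IsPMColoring G σ (n + 1) (Function.update c u 0) := by
  rw [Nat.even_iff] at hn
  have hmem (w : V) := mem_Mset_iff.mp (hc.1 w)
  refine ⟨fun w => mem_Mset_iff.mpr ?_, fun x y hxy => ?_⟩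
  · have := hmem w
    rcases eq_or_ne w u with rfl | hw
    · simp only [Function.update_self]
      omega
    · simp only [Function.update_of_ne hw]
      omega
  have hy := hmem y
  rcases eq_or_ne x u with rfl | hxu
  · have := Int.units_val_mul_cases (σ s(x, y)) (c y)
    rw [Function.update_self, Function.update_of_ne (G.ne_of_adj hxy).symm]
    omega
  have hx := hmem x
  rcases eq_or_ne y u with rfl | hyu
  · have := Int.units_val_mul_cases (σ s(x, y)) 0
    rw [Function.update_self, Function.update_of_ne hxu]
    omega
  · rw [Function.update_of_ne hxu, Function.update_of_ne hyu, hσ x y hxu hyu]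
    exact hc.2 x y hxy

/-- The new extreme colors `±β` replace the color `0`; the sign of `β` on a former `0`-vertex
`w` is chosen so that it cannot clash with the color `-β` of `u`. -/
lemma IsPMColoring.exists_succ_of_odd {σ σ' : Sym2 V → ℤˣ} {n : ℕ} {c : V → ℤ}
    (hc : IsPMColoring G σ' n c) (hn : Odd n) (u : V)
    (hσ : ∀ x y, x ≠ u → y ≠ u → σ s(x, y) = σ' s(x, y)) :
    ∃ c', IsPMColoring G σ (n + 1) c' := by
  classical
  rw [Nat.odd_iff] at hn
  set β : ℤ := n / 2 + 1
  have hmem (w : V) := mem_Mset_iff.mp (hc.1 w)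
  let c' : V → ℤ := fun w => if w = u then -β else if c w = 0 then σ s(u, w) * β else c w
  have hcu : c' u = -β := if_pos rfl
  have hcw (w : V) (hw : w ≠ u) : c' w = if c w = 0 then σ s(u, w) * β else c w := if_neg hw
  refine ⟨c', fun w => mem_Mset_iff.mpr ?_, fun x y hxy => ?_⟩
  · have := hmem w
    rcases eq_or_ne w u with rfl | hw
    · rw [hcu]
      omega
    · have := Int.units_val_mul_cases (σ s(u, w)) β
      rw [hcw w hw]
      split_ifs <;> omega
  have hx := hmem x
  have hy := hmem y
  rcases eq_or_ne x u with rfl | hxu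
  · have := Int.units_val_mul_cases (σ s(x, y)) (c y)
    have := Int.units_val_mul_cases (σ s(x, y)) β
    have := Int.units_val_mul_cases (σ s(x, y)) (σ s(x, y) * β)
    rw [hcu, hcw y (G.ne_of_adj hxy).symm]
    split_ifs <;> omega
  rcases eq_or_ne y u with rfl | hyu
  · have hs : (σ s(x, y) : ℤ) = σ s(y, x) := by rw [Sym2.eq_swap]
    have := Int.units_val_mul_cases (σ s(y, x)) β
    have := Int.units_val_mul_cases (σ s(y, x)) (-β)
    rw [hcu, hcw x hxu, hs]
    split_ifs <;> omega
  · have hxy' := hc.2 x y hxy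
    rw [← hσ x y hxu hyu] at hxy'
    have := Int.units_val_mul_cases (σ s(x, y)) (c y)
    have := Int.units_val_mul_cases (σ s(x, y)) (σ s(u, y) * β)
    have := Int.units_val_mul_cases (σ s(u, x)) β
    have := Int.units_val_mul_cases (σ s(u, y)) β
    rw [hcw x hxu, hcw y hyu]
    split_ifs <;> omega

lemma chiMod_update_le [Finite V] [DecidableEq (Sym2 V)] (σ : Sym2 V → ℤˣ) (e : Sym2 V)
    (b : ℤˣ) : chiMod G (Function.update σ e b) ≤ chiMod G σ + 1 := by
  induction e using Sym2.ind with
  | h u v =>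
    obtain ⟨hk, c, hc⟩ := two_le_chiMod_and_exists_isModColoring (G := G) σ
    obtain ⟨c', hc'⟩ := hc.exists_succ hk u fun x y hx hy => update_sym2_apply_of_ne σ b hx hy
    exact chiMod_le (by omega) hc'

lemma chiPM_update_le [Finite V] [DecidableEq (Sym2 V)] (σ : Sym2 V → ℤˣ) (e : Sym2 V)
    (b : ℤˣ) : chiPM G (Function.update σ e b) ≤ chiPM G σ + 1 := by
  induction e using Sym2.ind with
  | h u v =>
    classical
    obtain ⟨c, hc⟩ := exists_isPMColoring_chiPM (G := G) σ
    have hσ (x y : V) (hx : x ≠ u) (hy : y ≠ u) := update_sym2_apply_of_ne σ b (v := v) hx hy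
    rcases Nat.even_or_odd (chiPM G σ) with hn | hn
    · exact chiPM_le (hc.update_zero hn u hσ)
    · obtain ⟨c', hc'⟩ := hc.exists_succ_of_odd hn u hσ
      exact chiPM_le hc'

end Colorings

/-- The chromatic spectrum of a graph `G` with respect to the modular chromatic
number `χ` and with respect to `χ±` is an interval of integers. -/
theorem chromatic_spectrum_is_interval {V : Type*} [Fintype V] (G : SimpleGraph V) :
    {m : ℕ | ∃ σ : Sym2 V → ℤˣ, chiMod G σ = m} =
        Set.Icc (sInf {m : ℕ | ∃ σ : Sym2 V → ℤˣ, chiMod G σ = m})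
          (sSup {m : ℕ | ∃ σ : Sym2 V → ℤˣ, chiMod G σ = m}) ∧
      {m : ℕ | ∃ σ : Sym2 V → ℤˣ, chiPM G σ = m} =
        Set.Icc (sInf {m : ℕ | ∃ σ : Sym2 V → ℤˣ, chiPM G σ = m})
          (sSup {m : ℕ | ∃ σ : Sym2 V → ℤˣ, chiPM G σ = m}) := by
  classical
  exact ⟨range_eq_Icc_of_update_le_succ (chiMod_update_le (G := G)),
    range_eq_Icc_of_update_le_succ (chiPM_update_le (G := G))⟩
end
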